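/- arXiv:1111.2370 — 7 statements merged into one kernel-verified Lean document; each statement's English description precedes it below -/
import Mathlib

section
/- For all integers k ≥ 2 and w ≥ 2, there exists a finite poset P of width w without k+k together with a First-Fit chain partition of P using at least (k−1)(w−1) chains. -/
def HasWidth (α : Type) [PartialOrder α] (w : ℕ) : Prop :=
  (∀ s : Finset α, IsAntichain (· ≤ ·) (s : Set α) → s.card ≤ w) ∧
  ∃ s : Finset α, IsAntichain (· ≤ ·) (s : Set α) ∧ s.card = w

def NoKK (α : Type) [PartialOrder α] (k : ℕ) : Prop :=
  ¬ ∃ A B : Finset α, A.card = k ∧ B.card = k ∧ Disjoint A B ∧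
      IsChain (· ≤ ·) (A : Set α) ∧ IsChain (· ≤ ·) (B : Set α) ∧
      ∀ a ∈ A, ∀ b ∈ B, ¬ a ≤ b ∧ ¬ b ≤ a

def IsFFChainPartition {α : Type} [PartialOrder α] (q : ℕ) (C : Fin q → Finset α) : Prop :=
  (∀ i, (C i).Nonempty) ∧
  (∀ i j, i ≠ j → Disjoint (C i) (C j)) ∧
  (∀ v : α, ∃ i, v ∈ C i) ∧
  (∀ i, IsChain (· ≤ ·) ((C i : Set α))) ∧
  (∀ i j, i < j → ∀ v ∈ C j, ∃ w ∈ C i, ¬ v ≤ w ∧ ¬ w ≤ v)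

namespace FFwit

/-- The carrier: `w` lines, levels `z` with `z/c + z%c ≤ c`. -/
def P (w c : ℕ) : Type := {p : Fin w × Fin (c*c+1) // (p.2 : ℕ) / c + (p.2 : ℕ) % c ≤ c}

instance (w c : ℕ) : Fintype (P w c) := by unfold P; infer_instance

variable {w c : ℕ}

def line (a : P w c) : ℕ := (a.1.1 : ℕ)
def lvl (a : P w c) : ℕ := (a.1.2 : ℕ)

lemma line_lt (a : P w c) : line a < w := a.1.1.isLt
lemma lvl_cond (a : P w c) : lvl a / c + lvl a % c ≤ c := a.2

lemma ext_of {a b : P w c} (h1 : line a = line b) (h2 : lvl a = lvl b) : a = b := by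
  apply Subtype.ext
  apply Prod.ext <;> [exact Fin.ext h1; exact Fin.ext h2]

/-- The order. -/
def pOrd (w c : ℕ) : PartialOrder (P w c) where
  le a b := a = b ∨ (lvl a < lvl b ∧ (line a = line b ∨ lvl a + c ≤ lvl b))
  le_refl a := Or.inl rfl
  le_trans a b d hab hbd := by
    rcases hab with rfl | ⟨h1, h2⟩
    · exact hbd
    rcases hbd with rfl | ⟨h3, h4⟩
    · exact Or.inr ⟨h1, h2⟩
    refine Or.inr ⟨h1.trans h3, ?_⟩
    rcases h2 with h2 | h2
    · rcases h4 with h4 | h4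
      · exact Or.inl (h2.trans h4)
      · exact Or.inr (by omega)
    · exact Or.inr (by omega)
  le_antisymm a b hab hba := by
    rcases hab with rfl | ⟨h1, _⟩
    · rfl
    rcases hba with rfl | ⟨h2, _⟩
    · rfl
    omega

attribute [local instance] pOrd

lemma le_def {a b : P w c} :
    a ≤ b ↔ (a = b ∨ (lvl a < lvl b ∧ (line a = line b ∨ lvl a + c ≤ lvl b))) := Iff.rfl

lemma incomp_of {a b : P w c} (h : line a ≠ line b) (h1 : lvl b < lvl a + c)
    (h2 : lvl a < lvl b + c) : ¬ a ≤ b ∧ ¬ b ≤ a := by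
  constructor
  · rintro (rfl | ⟨hlt, heq | hgap⟩)
    · exact h rfl
    · exact h heq
    · omega
  · rintro (rfl | ⟨hlt, heq | hgap⟩)
    · exact h rfl
    · exact h heq.symm
    · omega

lemma comp_of_line_eq {a b : P w c} (h : line a = line b) : a ≤ b ∨ b ≤ a := by
  rcases Nat.lt_trichotomy (lvl a) (lvl b) with h1 | h1 | h1
  · exact Or.inl (Or.inr ⟨h1, Or.inl h⟩)
  · exact Or.inl (Or.inl (ext_of h h1))
  · exact Or.inr (Or.inr ⟨h1, Or.inl h.symm⟩)

lemma lvl_close_of_incomp {a b : P w c} (hc : 0 < c) (h1 : ¬ a ≤ b) (h2 : ¬ b ≤ a) :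
    lvl b < lvl a + c ∧ lvl a < lvl b + c := by
  rcases Nat.lt_trichotomy (lvl a) (lvl b) with h | h | h
  · constructor
    · by_contra hg
      exact h1 (Or.inr ⟨h, Or.inr (by omega)⟩)
    · omega
  · omega
  · constructor
    · omega
    · by_contra hg
      exact h2 (Or.inr ⟨h, Or.inr (by omega)⟩)

lemma span_bound (t : Finset ℕ) (ht : t.Nonempty) :
    t.card ≤ t.max' ht + 1 - t.min' ht := by
  have hsub : t ⊆ Finset.Icc (t.min' ht) (t.max' ht) := by
    intro x hx
    exact Finset.mem_Icc.mpr ⟨t.min'_le x hx, t.le_max' x hx⟩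
  calc t.card ≤ (Finset.Icc (t.min' ht) (t.max' ht)).card := Finset.card_le_card hsub
    _ = t.max' ht + 1 - t.min' ht := Nat.card_Icc _ _

/-! ### arithmetic helpers -/

lemma tmul (t : ℕ) (hw : 0 < w) : t * (w - 1) + t = t * w := by
  have h1 : t * ((w - 1) + 1) = t * (w - 1) + t := Nat.mul_succ t (w - 1)
  have h2 : (w - 1) + 1 = w := by omega
  rw [h2] at h1
  omega

lemma unwind (hw : 0 < w) (x t : ℕ) : ((x + t * (w - 1)) % w + t) % w = x % w := by
  rw [Nat.mod_add_mod]
  have h : x + t * (w - 1) + t = x + t * w := by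
    have := tmul (w := w) t hw; omega
  rw [h, Nat.add_mul_mod_self_right]

lemma unwind2 (hw : 0 < w) (x t : ℕ) : ((x + t) % w + t * (w - 1)) % w = x % w := by
  rw [Nat.mod_add_mod]
  have h : x + t + t * (w - 1) = x + t * w := by
    have := tmul (w := w) t hw; omega
  rw [h, Nat.add_mul_mod_self_right]

lemma pair_unique (hw : 0 < w) {a b a' b' : ℕ} (hb : b < w) (hb' : b' < w)
    (h : w * a + b = w * a' + b') : a = a' ∧ b = b' := by
  have h1 : (w * a + b) / w = a := by
    rw [Nat.mul_add_div hw, Nat.div_eq_of_lt hb, add_zero]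
  have h2 : (w * a' + b') / w = a' := by
    rw [Nat.mul_add_div hw, Nat.div_eq_of_lt hb', add_zero]
  have h3 : (w * a + b) % w = b := by
    rw [Nat.mul_add_mod, Nat.mod_eq_of_lt hb]
  have h4 : (w * a' + b') % w = b' := by
    rw [Nat.mul_add_mod, Nat.mod_eq_of_lt hb']
  constructor
  · rw [← h1, ← h2, h]
  · rw [← h3, ← h4, h]

lemma mod_succ_ne (hw : 2 ≤ w) (a : ℕ) : (a + 1) % w ≠ a % w := by
  intro h
  have : a ≤ a + 1 := by omega
  have hd : w ∣ (a + 1) - a := (Nat.modEq_iff_dvd' this).mp h.symm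
  simp only [Nat.add_sub_cancel_left] at hd
  have := Nat.le_of_dvd (by omega) hd
  omega

/-! ### elements and classes -/

def mk (hc : 0 < c) (s t r : ℕ) (hs : s < w) (hr : r < c) (htr : t + r ≤ c) : P w c :=
  ⟨(⟨s, hs⟩, ⟨c * t + r, by
      have h1 : r ≤ c * r := Nat.le_mul_of_pos_left r hc
      have h2 : c * t + c * r ≤ c * c := by
        rw [← Nat.mul_add]
        exact Nat.mul_le_mul_left c htr
      omega⟩), by
    simp only []
    have hd : (c * t + r) / c = t := by
      rw [Nat.mul_add_div hc, Nat.div_eq_of_lt hr, add_zero]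
    have hm : (c * t + r) % c = r := by
      rw [Nat.mul_add_mod, Nat.mod_eq_of_lt hr]
    simp only [hd, hm]
    exact htr⟩

@[simp] lemma line_mk (hc : 0 < c) (s t r : ℕ) (hs : s < w) (hr : r < c) (htr : t + r ≤ c) :
    line (mk hc s t r hs hr htr) = s := rfl

@[simp] lemma lvl_mk (hc : 0 < c) (s t r : ℕ) (hs : s < w) (hr : r < c) (htr : t + r ≤ c) :
    lvl (mk hc s t r hs hr htr) = c * t + r := rfl

def classOf (v : P w c) : ℕ :=
  w * (lvl v % c) + ((line v + (lvl v / c) * (w - 1)) % w)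

lemma classOf_mk (hc : 0 < c) (hw : 0 < w) (s t r : ℕ) (hs : s < w) (hr : r < c)
    (htr : t + r ≤ c) : classOf (mk hc s t r hs hr htr) = w * r + ((s + t * (w - 1)) % w) := by
  unfold classOf
  rw [line_mk, lvl_mk]
  have hd : (c * t + r) / c = t := by
    rw [Nat.mul_add_div hc, Nat.div_eq_of_lt hr, add_zero]
  have hm : (c * t + r) % c = r := by
    rw [Nat.mul_add_mod, Nat.mod_eq_of_lt hr]
  rw [hd, hm]

lemma classOf_lt (hc : 0 < c) (hw : 0 < w) (v : P w c) : classOf v < w * c := by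
  unfold classOf
  have h1 : lvl v % c < c := Nat.mod_lt _ hc
  have h2 : (line v + (lvl v / c) * (w - 1)) % w < w := Nat.mod_lt _ hw
  calc w * (lvl v % c) + (line v + lvl v / c * (w - 1)) % w
      < w * (lvl v % c) + w := by omega
    _ = w * (lvl v % c + 1) := by rw [Nat.mul_succ]
    _ ≤ w * c := Nat.mul_le_mul_left w (by omega)

/-- recover the line from the class data -/
lemma line_eq_of_classOf (hw : 0 < w) (v : P w c) :
    line v = ((line v + (lvl v / c) * (w - 1)) % w + lvl v / c) % w := by
  rw [unwind hw, Nat.mod_eq_of_lt (line_lt v)]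

end FFwit

open FFwit

theorem stmt5 (k w : ℕ) (hk : 2 ≤ k) (hw : 2 ≤ w) :
    ∃ (α : Type) (_ : Fintype α) (instP : PartialOrder α),
      @HasWidth α instP w ∧ @NoKK α instP k ∧
      ∃ q, (k - 1) * (w - 1) ≤ q ∧
        ∃ C : Fin q → Finset α, @IsFFChainPartition α instP q C := by
  classical
  obtain ⟨c, rfl⟩ : ∃ c, k = c + 1 := ⟨k - 1, by omega⟩
  letI : PartialOrder (P w c) := pOrd w c
  have hc : 0 < c := by omega
  have hw0 : 0 < w := by omega
  refine ⟨P w c, inferInstance, pOrd w c, ?_, ?_, ?_⟩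
  · -- HasWidth
    constructor
    · -- upper bound
      intro s hs
      have hcard : s.card ≤ (Finset.range w).card := by
        apply Finset.card_le_card_of_injOn line
        · intro a _; exact Finset.mem_range.mpr (line_lt a)
        · intro a ha b hb hline
          by_contra hne
          rcases comp_of_line_eq hline with h | h
          · exact hs (by exact_mod_cast ha) (by exact_mod_cast hb) hne h
          · exact hs (by exact_mod_cast hb) (by exact_mod_cast ha) (Ne.symm hne) h
      simpa using hcard
    · -- a w-antichain: the bottom row
      refine ⟨Finset.univ.image (fun l : Fin w => mk hc l.val 0 0 l.isLt hc (by omega)), ?_, ?_⟩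
      · intro a ha b hb hne
        simp only [Finset.coe_image, Set.mem_image, Finset.mem_coe, Finset.mem_univ] at ha hb
        obtain ⟨la, -, rfl⟩ := ha
        obtain ⟨lb, -, rfl⟩ := hb
        have hlab : (la : ℕ) ≠ (lb : ℕ) := fun h => hne (ext_of h rfl)
        refine (incomp_of ?_ ?_ ?_).1
        · simpa using hlab
        · show lvl _ < lvl _ + c
          rw [lvl_mk, lvl_mk]
          omega
        · show lvl _ < lvl _ + c
          rw [lvl_mk, lvl_mk]
          omega
      · rw [Finset.card_image_of_injective _ ?_, Finset.card_univ, Fintype.card_fin]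
        intro a b hab
        have := congrArg line hab
        simp only [line_mk] at this
        exact Fin.ext this
  · -- NoKK
    rintro ⟨A, B, hAcard, hBcard, -, hchA, hchB, hinc⟩
    -- levels injective on chains
    have hinj : ∀ (s : Finset (P w c)), IsChain (· ≤ ·) (s : Set (P w c)) →
        Set.InjOn lvl (s : Set (P w c)) := by
      intro s hch a ha b hb hl
      by_contra hne
      rcases hch ha hb hne with h | h <;>
        rcases h with h | ⟨h1, -⟩ <;> first | exact hne h | exact hne h.symm | omega
    have hAin := hinj A hchA
    have hBin := hinj B hchB
    set tA := A.image lvl with htAdef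
    set tB := B.image lvl with htBdef
    have htAcard : tA.card = c + 1 := by rw [htAdef, Finset.card_image_of_injOn hAin, hAcard]
    have htBcard : tB.card = c + 1 := by rw [htBdef, Finset.card_image_of_injOn hBin, hBcard]
    have htA : tA.Nonempty := by rw [← Finset.card_pos, htAcard]; omega
    have htB : tB.Nonempty := by rw [← Finset.card_pos, htBcard]; omega
    have hspanA := span_bound tA htA
    have hspanB := span_bound tB htB
    rw [htAcard] at hspanA
    rw [htBcard] at hspanB
    obtain ⟨a1, ha1A, ha1⟩ := Finset.mem_image.mp (tA.min'_mem htA)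
    obtain ⟨a2, ha2A, ha2⟩ := Finset.mem_image.mp (tA.max'_mem htA)
    have hbound : ∀ y ∈ tB, y < tA.min' htA + c ∧ tA.max' htA < y + c := by
      intro y hy
      obtain ⟨b, hbB, rfl⟩ := Finset.mem_image.mp hy
      obtain ⟨h1, h2⟩ := hinc a1 ha1A b hbB
      obtain ⟨h3, h4⟩ := hinc a2 ha2A b hbB
      have c1 := lvl_close_of_incomp hc h1 h2
      have c2 := lvl_close_of_incomp hc h3 h4
      constructor
      · rw [← ha1]; exact c1.1
      · rw [← ha2]; omega
    have h1 := hbound _ (tB.max'_mem htB)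
    have h2 := hbound _ (tB.min'_mem htB)
    have hAle : tA.min' htA ≤ tA.max' htA := Finset.min'_le _ _ (tA.max'_mem htA)
    have hBle : tB.min' htB ≤ tB.max' htB := Finset.min'_le _ _ (tB.max'_mem htB)
    omega
  · -- FF partition with q = w * c classes
    refine ⟨w * c, ?_, ?_⟩
    · have h1 : c + 1 - 1 = c := rfl
      rw [h1, Nat.mul_comm]
      exact Nat.mul_le_mul_right c (by omega)
    refine ⟨fun i => Finset.univ.filter (fun v => classOf v = i.val), ?_, ?_, ?_, ?_, ?_⟩
    · -- nonempty
      intro i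
      have hi : i.val < w * c := i.isLt
      set r := i.val / w with hr
      set s := i.val % w with hs
      have hrc : r < c := by
        rw [hr]
        rw [Nat.div_lt_iff_lt_mul hw0]
        calc i.val < w * c := hi
          _ = c * w := Nat.mul_comm w c
      have hsw : s < w := Nat.mod_lt _ hw0
      refine ⟨mk hc s 0 r hsw hrc (by omega), ?_⟩
      rw [Finset.mem_filter]
      refine ⟨Finset.mem_univ _, ?_⟩
      rw [classOf_mk hc hw0]
      simp only [Nat.zero_mul, Nat.add_zero]
      rw [Nat.mod_eq_of_lt hsw]
      rw [hr, hs]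
      exact Nat.div_add_mod i.val w
    · -- disjoint
      intro i j hij
      rw [Finset.disjoint_left]
      intro v hvi hvj
      rw [Finset.mem_filter] at hvi hvj
      exact hij (Fin.ext (hvi.2.symm.trans hvj.2))
    · -- cover
      intro v
      exact ⟨⟨classOf v, classOf_lt hc hw0 v⟩, by simp [Finset.mem_filter]⟩
    · -- chains
      intro i u hu v hv hne
      simp only [Finset.mem_coe, Finset.mem_filter] at hu hv
      have hcl : classOf u = classOf v := hu.2.trans hv.2.symm
      unfold classOf at hcl
      have hru : lvl u % c < c := Nat.mod_lt _ hc
      have hsu : (line u + (lvl u / c) * (w - 1)) % w < w := Nat.mod_lt _ hw0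
      have hsv : (line v + (lvl v / c) * (w - 1)) % w < w := Nat.mod_lt _ hw0
      obtain ⟨hreq, hseq⟩ := pair_unique hw0 hsu hsv hcl
      -- if levels equal, elements are equal (contradiction)
      have hlvlne : lvl u ≠ lvl v := by
        intro hl
        apply hne
        apply ext_of ?_ hl
        have e1 := line_eq_of_classOf (w := w) (c := c) hw0 u
        have e2 := line_eq_of_classOf (w := w) (c := c) hw0 v
        rw [e1, e2, hseq, hl]
      have hdu := Nat.div_add_mod (lvl u) c
      have hdv := Nat.div_add_mod (lvl v) c
      rcases Nat.lt_or_ge (lvl u) (lvl v) with h | h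
      · refine Or.inl (Or.inr ⟨h, Or.inr ?_⟩)
        have htlt : lvl u / c < lvl v / c := by
          by_contra hge
          push_neg at hge
          have := Nat.mul_le_mul_left c hge
          omega
        have := Nat.mul_le_mul_left c (Nat.succ_le_of_lt htlt)
        rw [Nat.mul_succ] at this
        omega
      · have h' : lvl v < lvl u := by omega
        refine Or.inr (Or.inr ⟨h', Or.inr ?_⟩)
        have htlt : lvl v / c < lvl u / c := by
          by_contra hge
          push_neg at hge
          have := Nat.mul_le_mul_left c hge
          omega
        have := Nat.mul_le_mul_left c (Nat.succ_le_of_lt htlt)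
        rw [Nat.mul_succ] at this
        omega
    · -- witnesses
      intro i j hij v hv
      rw [Finset.mem_filter] at hv
      have hvj : classOf v = j.val := hv.2
      set rv := lvl v % c with hrv
      set tv := lvl v / c with htv
      set sv := (line v + tv * (w - 1)) % w with hsv
      have hvdec : w * rv + sv = j.val := hvj
      set r1 := i.val / w with hr1
      set s1 := i.val % w with hs1
      have hidec : w * r1 + s1 = i.val := Nat.div_add_mod i.val w
      have hr1c : r1 < c := by
        rw [hr1, Nat.div_lt_iff_lt_mul hw0]
        calc i.val < w * c := i.isLt
          _ = c * w := Nat.mul_comm w c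
      have hs1w : s1 < w := Nat.mod_lt _ hw0
      have hsvw : sv < w := Nat.mod_lt _ hw0
      have hrvc : rv < c := Nat.mod_lt _ hc
      have htvrv : tv + rv ≤ c := lvl_cond v
      have hlvlv : c * tv + rv = lvl v := Nat.div_add_mod (lvl v) c
      have hlinev : line v = (sv + tv) % w := by
        rw [hsv]; exact line_eq_of_classOf hw0 v
      have hij' : i.val < j.val := hij
      clear_value s1 r1 sv tv rv
      rcases Nat.lt_trichotomy r1 rv with hlt | heq | hgt
      · -- two flanking witnesses; at least one on a different line
        have hm1 : tv + r1 ≤ c := by omega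
        have hm2 : (tv + 1) + r1 ≤ c := by omega
        set u1 := mk hc ((s1 + tv) % w) tv r1 (Nat.mod_lt _ hw0) hr1c hm1 with hu1
        set u2 := mk hc ((s1 + tv + 1) % w) (tv + 1) r1 (Nat.mod_lt _ hw0) hr1c hm2 with hu2
        have hc1 : classOf u1 = i.val := by
          rw [hu1, classOf_mk hc hw0, unwind2 hw0, Nat.mod_eq_of_lt hs1w, hidec]
        have hc2 : classOf u2 = i.val := by
          rw [hu2, classOf_mk hc hw0]
          have : s1 + tv + 1 = s1 + (tv + 1) := by omega
          rw [this, unwind2 hw0, Nat.mod_eq_of_lt hs1w, hidec]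
        have hlines : line u1 ≠ line u2 := by
          rw [hu1, hu2, line_mk, line_mk]
          intro h
          exact mod_succ_ne hw (s1 + tv) h.symm
        have hwit : ∀ u : P w c, classOf u = i.val → line u ≠ line v →
            (lvl v < lvl u + c ∧ lvl u < lvl v + c) →
            ∃ u' ∈ Finset.univ.filter (fun x => classOf x = i.val), ¬ v ≤ u' ∧ ¬ u' ≤ v := by
          intro u hcu hlu ⟨hl1, hl2⟩
          refine ⟨u, by simp [Finset.mem_filter, hcu], ?_⟩
          have := incomp_of (a := v) (b := u) (fun h => hlu h.symm) hl2 hl1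
          exact ⟨this.1, this.2⟩
        by_cases hcase : line u1 = line v
        · have hne2 : line u2 ≠ line v := fun h => hlines (hcase.trans h.symm)
          refine hwit u2 hc2 hne2 ⟨?_, ?_⟩ <;>
            · rw [hu2, lvl_mk, Nat.mul_succ]; omega
        · refine hwit u1 hc1 hcase ⟨?_, ?_⟩ <;>
            · rw [hu1, lvl_mk]; omega
      · -- same residue: same-level witness on a different line
        have hs1sv : s1 < sv := by
          have key : w * r1 + s1 < w * rv + sv := by rw [hidec, hvdec]; exact hij'
          rw [heq] at key
          omega
        set u := mk hc ((s1 + tv) % w) tv rv (Nat.mod_lt _ hw0) hrvc htvrv with hu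
        have hcu : classOf u = i.val := by
          rw [hu, classOf_mk hc hw0, unwind2 hw0, Nat.mod_eq_of_lt hs1w, ← heq, hidec]
        have hlu : line u ≠ line v := by
          rw [hu, line_mk, hlinev]
          intro h
          have h' : s1 % w = sv % w := by
            have := Nat.ModEq.add_right_cancel' tv (h : (s1 + tv) % w = (sv + tv) % w)
            exact this
          rw [Nat.mod_eq_of_lt hs1w, Nat.mod_eq_of_lt hsvw] at h'
          omega
        refine ⟨u, by simp [Finset.mem_filter, hcu], ?_⟩
        have hlveq : lvl u = lvl v := by rw [hu, lvl_mk, hlvlv]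
        have := incomp_of (a := v) (b := u) (fun h => hlu h.symm) (by omega) (by omega)
        exact ⟨this.1, this.2⟩
      · -- impossible: j's residue smaller
        exfalso
        have : j.val < i.val := by
          calc j.val = w * rv + sv := hvdec.symm
            _ < w * rv + w := by omega
            _ = w * (rv + 1) := (Nat.mul_succ w rv).symm
            _ ≤ w * r1 := Nat.mul_le_mul_left w (by omega)
            _ ≤ w * r1 + s1 := by omega
            _ = i.val := hidec
        omega
end

section
/- For q ≥ 2, let P_q be the poset on elements v_{i,j} for 1 ≤ j ≤ i ≤ q, where v_{i,j} < v_{i',j'} iff i ≤ i'−2, or i ∈ {i'−1, i'} and j ≤ j'−1. Then P_q has width exactly 2. -/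
/-- The ground set of the poset `P_q`: pairs `(i, j)` with `1 ≤ j ≤ i ≤ q`. -/
def Pelt (q : ℕ) : Type :=
  {p : Fin (q + 1) × Fin (q + 1) // 1 ≤ (p.2 : ℕ) ∧ (p.2 : ℕ) ≤ (p.1 : ℕ)}

/-- The strict order of `P_q`: `v_{i,j} < v_{i',j'}` iff `i ≤ i' - 2`, or
`i ∈ {i' - 1, i'}` and `j ≤ j' - 1` (written without ℕ-truncation). -/
def Plt {q : ℕ} (u v : Pelt q) : Prop :=
  (u.1.1 : ℕ) + 2 ≤ (v.1.1 : ℕ) ∨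
    (((u.1.1 : ℕ) + 1 = (v.1.1 : ℕ) ∨ (u.1.1 : ℕ) = (v.1.1 : ℕ)) ∧
      (u.1.2 : ℕ) + 1 ≤ (v.1.2 : ℕ))

/-- Incomparability in `P_q`. -/
def PIncomp {q : ℕ} (u v : Pelt q) : Prop := ¬ Plt u v ∧ ¬ Plt v u

/-- `P_q` is a strict partial order of width exactly 2. -/
theorem stmt6 (q : ℕ) (hq : 2 ≤ q) :
    (∀ u : Pelt q, ¬ Plt u u) ∧
    (∀ u v w : Pelt q, Plt u v → Plt v w → Plt u w) ∧
    (∃ u v : Pelt q, u ≠ v ∧ PIncomp u v) ∧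
    (∀ s : Finset (Pelt q), (∀ u ∈ s, ∀ v ∈ s, u ≠ v → PIncomp u v) → s.card ≤ 2) := by
  refine ⟨?_, ?_, ?_, ?_⟩
  · intro u; unfold Plt; omega
  · intro u v w h1 h2; unfold Plt at *; omega
  · have h1 : (1 : ℕ) < q + 1 := by omega
    have h2 : (2 : ℕ) < q + 1 := by omega
    refine ⟨⟨(⟨1, h1⟩, ⟨1, h1⟩), by simp⟩, ⟨(⟨2, h2⟩, ⟨1, h1⟩), by simp⟩, ?_, ?_⟩
    · intro h
      have := congrArg (fun x : Pelt q => (x.1.1 : ℕ)) h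
      simp at this
    · constructor <;> (unfold Plt; simp)
  · intro s hs
    have key : ∀ u ∈ s, ∀ v ∈ s, (u.1.1 : ℕ) % 2 = (v.1.1 : ℕ) % 2 → u = v := by
      intro u hu v hv hpar
      by_contra hne
      obtain ⟨h1, h2⟩ := hs u hu v hv hne
      unfold Plt at h1 h2
      obtain ⟨hu1, hu2⟩ := u.2
      obtain ⟨hv1, hv2⟩ := v.2
      have hi : (u.1.1 : ℕ) = (v.1.1 : ℕ) := by omega
      have hj : (u.1.2 : ℕ) = (v.1.2 : ℕ) := by omega
      exact hne (Subtype.ext (Prod.ext (Fin.ext hi) (Fin.ext hj)))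
    have : s.card ≤ ({0, 1} : Finset ℕ).card := by
      apply Finset.card_le_card_of_injOn (fun u => (u.1.1 : ℕ) % 2)
      · intro u _; simp; omega
      · intro u hu v hv h; exact key u hu v hv h
    simpa using this
end

section
/- For q ≥ 2, the poset P_q (on elements v_{i,j}, 1 ≤ j ≤ i ≤ q, with v_{i,j} < v_{i',j'} iff i ≤ i'−2, or i ∈ {i'−1, i'} and j ≤ j'−1) contains no two disjoint incomparable chains each of size q+1; in fact every element of P_q is incomparable to at most q other elements. -/
/-- A chain of `P_q` (pairwise comparable set). -/
def PChain {q : ℕ} (s : Finset (Pelt q)) : Prop :=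
  ∀ u ∈ s, ∀ v ∈ s, u ≠ v → Plt u v ∨ Plt v u

instance peltFinite (q : ℕ) : Finite (Pelt q) := by
  unfold Pelt; infer_instance

lemma card_incomp_le (q : ℕ) (v : Pelt q) :
    {u : Pelt q | u ≠ v ∧ PIncomp u v}.ncard ≤ q := by
  set s := {u : Pelt q | u ≠ v ∧ PIncomp u v} with hs
  have hmem : ∀ u ∈ s,
      ((u.1.1 : ℕ) = (v.1.1 : ℕ) + 1 ∧ (u.1.2 : ℕ) ≤ (v.1.2 : ℕ)) ∨
      ((u.1.1 : ℕ) + 1 = (v.1.1 : ℕ) ∧ (v.1.2 : ℕ) ≤ (u.1.2 : ℕ)) := by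
    intro u hu
    obtain ⟨hne, h1, h2⟩ := hu
    unfold Plt at h1 h2
    push_neg at h1 h2
    by_cases hii : (u.1.1 : ℕ) = (v.1.1 : ℕ)
    · exfalso
      apply hne
      have hjj : (u.1.2 : ℕ) = (v.1.2 : ℕ) := by omega
      apply Subtype.ext
      apply Prod.ext <;> exact Fin.ext (by omega)
    · omega
  set f : Pelt q → ℕ := fun u =>
    if (u.1.1 : ℕ) = (v.1.1 : ℕ) + 1 then (u.1.2 : ℕ) - 1 else (u.1.2 : ℕ) with hf
  have hvj1 : 1 ≤ (v.1.2 : ℕ) := v.2.1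
  have hinj : Set.InjOn f s := by
    intro a ha b hb hab
    have haM := hmem a ha
    have hbM := hmem b hb
    have haq := a.2
    have hbq := b.2
    simp only [hf] at hab
    have haa : (a.1.1 : ℕ) = (b.1.1 : ℕ) ∧ (a.1.2 : ℕ) = (b.1.2 : ℕ) := by
      rcases haM with ⟨h1, h2⟩ | ⟨h1, h2⟩ <;> rcases hbM with ⟨h3, h4⟩ | ⟨h3, h4⟩
      · rw [if_pos h1, if_pos h3] at hab; exact ⟨by omega, by omega⟩
      · rw [if_pos h1, if_neg (by omega)] at hab; exact absurd hab (by omega)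
      · rw [if_neg (by omega), if_pos h3] at hab; exact absurd hab (by omega)
      · rw [if_neg (by omega), if_neg (by omega)] at hab; exact ⟨by omega, by omega⟩
    apply Subtype.ext
    apply Prod.ext <;> exact Fin.ext (by omega)
  have hsub : f '' s ⊆ Set.Iio q := by
    rintro x ⟨u, hu, rfl⟩
    have hM := hmem u hu
    have huq := u.2
    have hvq := v.2
    have hvle : (v.1.1 : ℕ) ≤ q := Nat.lt_succ_iff.mp v.1.1.isLt
    have hule : (u.1.1 : ℕ) ≤ q := Nat.lt_succ_iff.mp u.1.1.isLt
    simp only [hf, Set.mem_Iio]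
    rcases hM with ⟨h1, h2⟩ | ⟨h1, h2⟩
    · rw [if_pos h1]; omega
    · rw [if_neg (by omega)]; omega
  calc s.ncard = (f '' s).ncard := (Set.ncard_image_of_injOn hinj).symm
    _ ≤ (Set.Iio q).ncard := Set.ncard_le_ncard hsub (Set.finite_Iio q)
    _ = q := by rw [← Finset.coe_Iio, Set.ncard_coe_finset, Nat.card_Iio]

/-- Every element of `P_q` is incomparable to at most `q` other elements; in
particular `P_q` contains no two disjoint incomparable chains of size `q+1`. -/
theorem stmt7 (q : ℕ) (hq : 2 ≤ q) :
    (∀ v : Pelt q, {u : Pelt q | u ≠ v ∧ PIncomp u v}.ncard ≤ q) ∧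
    ¬ ∃ A B : Finset (Pelt q), A.card = q + 1 ∧ B.card = q + 1 ∧ Disjoint A B ∧
        PChain A ∧ PChain B ∧ ∀ a ∈ A, ∀ b ∈ B, PIncomp a b := by
  refine ⟨fun v => card_incomp_le q v, ?_⟩
  rintro ⟨A, B, hA, hB, hdisj, -, -, hinc⟩
  obtain ⟨a, ha⟩ := Finset.card_pos.mp (by omega : 0 < A.card)
  have hsub : (B : Set (Pelt q)) ⊆ {u : Pelt q | u ≠ a ∧ PIncomp u a} := by
    intro b hb
    refine ⟨fun h => ?_, (hinc a ha b hb).2, (hinc a ha b hb).1⟩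
    exact Finset.disjoint_left.mp hdisj ha (h ▸ hb)
  have := Set.ncard_le_ncard hsub (Set.toFinite _)
  rw [Set.ncard_coe_finset, hB] at this
  have := card_incomp_le q a
  omega
end

section
/- For q ≥ 2, the assignment sending element v_{i,j} of the poset P_q to chain number i−j+1 is a First-Fit chain partition of P_q into exactly q chains. -/
/-- The chain number `i - j + 1` assigned to `v_{i,j}`. -/
def chainIdx {q : ℕ} (v : Pelt q) : ℕ := (v.1.1 : ℕ) - (v.1.2 : ℕ) + 1

/-- Assigning `v_{i,j}` to chain `i - j + 1` yields a First-Fit chain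
partition of `P_q` into exactly `q` chains: the chain indices cover exactly
`1, …, q` (each chain being nonempty), each class is a chain of `P_q`, and
for `a < b` every element of chain `b` is incomparable to some element of
chain `a`. -/
theorem stmt8 (q : ℕ) (hq : 2 ≤ q) :
    (∀ v : Pelt q, 1 ≤ chainIdx v ∧ chainIdx v ≤ q) ∧
    (∀ a, 1 ≤ a → a ≤ q → ∃ v : Pelt q, chainIdx v = a) ∧
    (∀ u v : Pelt q, u ≠ v → chainIdx u = chainIdx v → Plt u v ∨ Plt v u) ∧
    (∀ a b, 1 ≤ a → a < b → b ≤ q →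
      ∀ v : Pelt q, chainIdx v = b → ∃ w : Pelt q, chainIdx w = a ∧ PIncomp v w) := by
  refine ⟨?_, ?_, ?_, ?_⟩
  · rintro ⟨⟨⟨i, hi⟩, ⟨j, hj⟩⟩, h1, h2⟩
    replace h1 : 1 ≤ j := h1
    replace h2 : j ≤ i := h2
    simp only [chainIdx]
    omega
  · intro a ha hb
    refine ⟨⟨(⟨a, by omega⟩, ⟨1, by omega⟩), by simp; omega⟩, ?_⟩
    simp only [chainIdx]
    omega
  · rintro ⟨⟨⟨i, hi⟩, ⟨j, hj⟩⟩, h1, h2⟩ ⟨⟨⟨i', hi'⟩, ⟨j', hj'⟩⟩, h1', h2'⟩ hne heq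
    simp only [chainIdx] at heq
    have hne' : i ≠ i' ∨ j ≠ j' := by
      by_contra h
      push_neg at h
      obtain ⟨rfl, rfl⟩ := h
      exact hne rfl
    replace h1 : 1 ≤ j := h1
    replace h2 : j ≤ i := h2
    replace h1' : 1 ≤ j' := h1'
    replace h2' : j' ≤ i' := h2'
    simp only [Plt]
    omega
  · intro a b ha hab hbq
    rintro ⟨⟨⟨i, hi⟩, ⟨j, hj⟩⟩, h1, h2⟩ hv
    simp only [chainIdx] at hv
    replace h1 : 1 ≤ j := h1
    replace h2 : j ≤ i := h2
    refine ⟨⟨(⟨i - 1, by omega⟩, ⟨i - a, by omega⟩), by simp; omega⟩, ?_, ?_, ?_⟩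
    · simp only [chainIdx]; omega
    · simp only [Plt, PIncomp]; omega
    · simp only [Plt, PIncomp]; omega
end

section
/- For k ≥ 2 and w ≥ 3, the poset Q_{k,w} contains no two disjoint incomparable chains each of size k. -/
/-- The ground set of `Q_{k,w}`: triples `(ℓ, i, j)` with `1 ≤ ℓ ≤ w - 1`
(the copy index) and `1 ≤ j ≤ i ≤ k - 1` (an element `v_{i,j}` of `P_{k-1}`). -/
def Qelt (k w : ℕ) : Type :=
  {x : Fin w × Fin k × Fin k //
    1 ≤ (x.1 : ℕ) ∧ 1 ≤ (x.2.2 : ℕ) ∧ (x.2.2 : ℕ) ≤ (x.2.1 : ℕ)}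

/-- The strict order of `Q_{k,w}`: within a copy the order of `P_{k-1}`
(`v_{i,j} < v_{i',j'}` iff `i ≤ i' - 2`, or `i ∈ {i'-1, i'}` and `j ≤ j' - 1`),
and `v^ℓ_{i,j} < v^{ℓ'}_{i',j'}` whenever `ℓ < ℓ'` and `i ≠ k - 1`. -/
def Qlt {k w : ℕ} (u v : Qelt k w) : Prop :=
  ((u.1.1 : ℕ) = (v.1.1 : ℕ) ∧
    ((u.1.2.1 : ℕ) + 2 ≤ (v.1.2.1 : ℕ) ∨
      (((u.1.2.1 : ℕ) + 1 = (v.1.2.1 : ℕ) ∨ (u.1.2.1 : ℕ) = (v.1.2.1 : ℕ)) ∧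
        (u.1.2.2 : ℕ) + 1 ≤ (v.1.2.2 : ℕ)))) ∨
  ((u.1.1 : ℕ) < (v.1.1 : ℕ) ∧ (u.1.2.1 : ℕ) ≠ k - 1)

def QIncomp {k w : ℕ} (u v : Qelt k w) : Prop := ¬ Qlt u v ∧ ¬ Qlt v u

/-- A chain of `Q_{k,w}`. -/
def QChain {k w : ℕ} (s : Finset (Qelt k w)) : Prop :=
  ∀ u ∈ s, ∀ v ∈ s, u ≠ v → Qlt u v ∨ Qlt v u

/-! The comparisons between copies only go upwards from rows below the top row `k - 1`. So if a
chain climbed from one copy to another, every element incomparable to it would sit in the top row.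
A chain inside the top row stays in one copy, so it has at most the `k - 1` elements
`v_{k-1,1} < ⋯ < v_{k-1,k-1}` and is too short to be the other chain. Hence each chain lies in one
copy; if the copies differ, the lower chain lies in the top row and is too short again. In a common
copy, incomparable distinct elements lie in adjacent rows, so one of the chains lies in a single
row of `P_{k-1}`, which has at most `k - 1` elements. -/

namespace Qelt

variable {k w : ℕ}

-- `v^ℓ_{i,j}` has `copy = ℓ`, `row = i` and `col = j`.
def copy (u : Qelt k w) : ℕ := u.1.1

def row (u : Qelt k w) : ℕ := u.1.2.1

def col (u : Qelt k w) : ℕ := u.1.2.2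

lemma ext_copy_row_col {u v : Qelt k w} (hc : u.copy = v.copy) (hr : u.row = v.row)
    (hj : u.col = v.col) : u = v :=
  Subtype.ext (Prod.ext (Fin.ext hc) (Prod.ext (Fin.ext hr) (Fin.ext hj)))

lemma row_lt (u : Qelt k w) : u.row < k := u.1.2.1.isLt

lemma one_le_col (u : Qelt k w) : 1 ≤ u.col := u.2.2.1

lemma col_le_row (u : Qelt k w) : u.col ≤ u.row := u.2.2.2

end Qelt

open Qelt

section Comparabilities

variable {k w : ℕ}

lemma qlt_iff {u v : Qelt k w} :
    Qlt u v ↔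
      (u.copy = v.copy ∧ (u.row + 2 ≤ v.row ∨
        ((u.row + 1 = v.row ∨ u.row = v.row) ∧ u.col + 1 ≤ v.col))) ∨
      (u.copy < v.copy ∧ u.row ≠ k - 1) :=
  Iff.rfl

lemma QIncomp.symm {u v : Qelt k w} (h : QIncomp u v) : QIncomp v u := ⟨h.2, h.1⟩

lemma QIncomp.row_eq_of_copy_lt {u v : Qelt k w} (h : QIncomp u v) (hc : u.copy < v.copy) :
    u.row = k - 1 := by
  have huv := h.1
  rw [qlt_iff] at huv
  omega

lemma QIncomp.row_eq_of_qlt_of_copy_lt {u v y : Qelt k w} (huv : Qlt u v)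
    (hc : u.copy < v.copy) (hu : QIncomp y u) (hv : QIncomp y v) : y.row = k - 1 := by
  have hyu := hu.2
  rw [qlt_iff] at huv hyu
  exact hv.row_eq_of_copy_lt (by omega)

lemma QIncomp.row_adjacent_of_copy_eq {u v : Qelt k w} (h : QIncomp u v) (hc : u.copy = v.copy)
    (hne : u ≠ v) : u.row + 1 = v.row ∨ v.row + 1 = u.row := by
  have h₁ := h.1
  have h₂ := h.2
  rw [qlt_iff] at h₁ h₂
  by_contra hadj
  exact hne (ext_copy_row_col hc (by omega) (by omega))

end Comparabilities

namespace QChain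

variable {k w : ℕ} {S : Finset (Qelt k w)}

lemma card_le_of_copy_row_eq (hS : QChain S) {c r : ℕ} (hc : ∀ x ∈ S, x.copy = c)
    (hr : ∀ x ∈ S, x.row = r) : S.card ≤ k - 1 := by
  have hcol : Set.InjOn col (S : Set (Qelt k w)) := by
    intro x hx y hy hxy
    by_contra hne
    have hxy' := hS x hx y hy hne
    have := hc x hx; have := hc y hy; have := hr x hx; have := hr y hy
    simp only [qlt_iff] at hxy'
    omega
  have hmaps : Set.MapsTo col (S : Set (Qelt k w)) (Finset.Icc 1 (k - 1)) := by
    intro x _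
    have := x.one_le_col; have := x.col_le_row; have := x.row_lt
    simp only [Finset.coe_Icc, Set.mem_Icc]
    omega
  simpa using Finset.card_le_card_of_injOn col hmaps hcol

lemma copy_eq_of_row_eq_top (hS : QChain S) (htop : ∀ x ∈ S, x.row = k - 1) {x y : Qelt k w}
    (hx : x ∈ S) (hy : y ∈ S) : x.copy = y.copy := by
  by_cases hxy : x = y
  · rw [hxy]
  have hcomp := hS x hx y hy hxy
  have := htop x hx; have := htop y hy
  simp only [qlt_iff] at hcomp
  omega

lemma card_le_of_row_eq_top (hS : QChain S) (htop : ∀ x ∈ S, x.row = k - 1) :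
    S.card ≤ k - 1 := by
  rcases S.eq_empty_or_nonempty with rfl | ⟨x₀, hx₀⟩
  · simp
  exact hS.card_le_of_copy_row_eq (fun x hx => hS.copy_eq_of_row_eq_top htop hx hx₀) htop

lemma copy_eq_of_incomp {T : Finset (Qelt k w)} (hS : QChain S) (hT : QChain T)
    (hk : k ≤ T.card) (hST : ∀ x ∈ S, ∀ y ∈ T, QIncomp x y) :
    ∀ {x x'}, x ∈ S → x' ∈ S → x.copy = x'.copy := by
  suffices h : ∀ {x x'}, x ∈ S → x' ∈ S → ¬ x.copy < x'.copy by
    intro x x' hx hx'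
    have := h hx hx'; have := h hx' hx
    omega
  intro x x' hx hx' hlt
  have hxx' : Qlt x x' := by
    have hcomp := hS x hx x' hx' (by rintro rfl; omega)
    simp only [qlt_iff] at hcomp ⊢
    omega
  have htop : ∀ y ∈ T, y.row = k - 1 := fun y hy =>
    QIncomp.row_eq_of_qlt_of_copy_lt hxx' hlt (hST x hx y hy).symm (hST x' hx' y hy).symm
  have := hT.card_le_of_row_eq_top htop
  have := x.row_lt
  omega

end QChain

lemma forall_row_eq_or_forall_row_eq_of_incomp {k w : ℕ} {A B : Finset (Qelt k w)}
    (hD : Disjoint A B) (hc : ∀ a ∈ A, ∀ b ∈ B, a.copy = b.copy)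
    (hAB : ∀ a ∈ A, ∀ b ∈ B, QIncomp a b) {a₀ b₀ : Qelt k w} (ha₀ : a₀ ∈ A) (hb₀ : b₀ ∈ B) :
    (∀ a ∈ A, a.row = a₀.row) ∨ (∀ b ∈ B, b.row = b₀.row) := by
  have hadj : ∀ a ∈ A, ∀ b ∈ B, a.row + 1 = b.row ∨ b.row + 1 = a.row := fun a ha b hb =>
    (hAB a ha b hb).row_adjacent_of_copy_eq (hc a ha b hb)
      (by rintro rfl; exact Finset.disjoint_left.mp hD ha hb)
  by_cases hA : ∀ a ∈ A, a.row = a₀.row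
  · exact Or.inl hA
  push Not at hA
  obtain ⟨a₁, ha₁, hne⟩ := hA
  -- `b.row` is adjacent to the two distinct rows `a₀.row` and `a₁.row`, so it lies between them.
  refine Or.inr fun b hb => ?_
  have := hadj a₀ ha₀ b hb; have := hadj a₁ ha₁ b hb
  have := hadj a₀ ha₀ b₀ hb₀; have := hadj a₁ ha₁ b₀ hb₀
  omega

theorem stmt10_general (k w : ℕ) (hk : 2 ≤ k) :
    ¬ ∃ A B : Finset (Qelt k w), A.card = k ∧ B.card = k ∧ Disjoint A B ∧
        QChain A ∧ QChain B ∧ ∀ a ∈ A, ∀ b ∈ B, QIncomp a b := by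
  rintro ⟨A, B, hA, hB, hD, hCA, hCB, hAB⟩
  have hBA : ∀ b ∈ B, ∀ a ∈ A, QIncomp b a := fun b hb a ha => (hAB a ha b hb).symm
  obtain ⟨a₀, ha₀⟩ : A.Nonempty := Finset.card_pos.mp (by omega)
  obtain ⟨b₀, hb₀⟩ : B.Nonempty := Finset.card_pos.mp (by omega)
  have hcA : ∀ a ∈ A, a.copy = a₀.copy := fun a ha => hCA.copy_eq_of_incomp hCB hB.ge hAB ha ha₀
  have hcB : ∀ b ∈ B, b.copy = b₀.copy := fun b hb => hCB.copy_eq_of_incomp hCA hA.ge hBA hb hb₀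
  suffices A.card ≤ k - 1 ∨ B.card ≤ k - 1 by omega
  rcases lt_trichotomy a₀.copy b₀.copy with hlt | heq | hgt
  · exact Or.inl <| hCA.card_le_of_row_eq_top fun a ha =>
      (hAB a ha b₀ hb₀).row_eq_of_copy_lt (hcA a ha ▸ hlt)
  · exact (forall_row_eq_or_forall_row_eq_of_incomp hD
      (fun a ha b hb => by rw [hcA a ha, hcB b hb, heq]) hAB ha₀ hb₀).imp
      (hCA.card_le_of_copy_row_eq hcA) (hCB.card_le_of_copy_row_eq hcB)
  · exact Or.inr <| hCB.card_le_of_row_eq_top fun b hb =>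
      (hBA b hb a₀ ha₀).row_eq_of_copy_lt (hcB b hb ▸ hgt)

/-- `Q_{k,w}` contains no two disjoint incomparable chains each of size `k`. -/
theorem stmt10 (k w : ℕ) (hk : 2 ≤ k) (hw : 3 ≤ w) :
    ¬ ∃ A B : Finset (Qelt k w), A.card = k ∧ B.card = k ∧ Disjoint A B ∧
        QChain A ∧ QChain B ∧ ∀ a ∈ A, ∀ b ∈ B, QIncomp a b :=
  stmt10_general k w hk
end

section
/- For k ≥ 2 and w ≥ 3, assigning the element v^ℓ_{i,j} of Q_{k,w} to chain number (k−1)(ℓ−1) + (i−j+1) yields a First-Fit chain partition of Q_{k,w} into exactly (k−1)(w−1) chains. -/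
/-- The chain number `(k-1)(ℓ-1) + (i-j+1)` assigned to `v^ℓ_{i,j}`. -/
def qChainIdx {k w : ℕ} (v : Qelt k w) : ℕ :=
  (k - 1) * ((v.1.1 : ℕ) - 1) + ((v.1.2.1 : ℕ) - (v.1.2.2 : ℕ) + 1)

/-- Auxiliary: uniqueness of the `(quotient, remainder)` representation with
remainders in `[1, m]`. -/
lemma qq_aux_eq (m x y c c' : ℕ) (hc1 : 1 ≤ c) (hc2 : c ≤ m) (hc1' : 1 ≤ c')
    (hc2' : c' ≤ m) (h : m * x + c = m * y + c') : x = y ∧ c = c' := by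
  rcases lt_trichotomy x y with h' | h' | h'
  · exfalso
    have h2 := Nat.mul_le_mul_left m (show x + 1 ≤ y by omega)
    rw [Nat.mul_add, Nat.mul_one] at h2
    omega
  · subst h'
    exact ⟨rfl, by omega⟩
  · exfalso
    have h2 := Nat.mul_le_mul_left m (show y + 1 ≤ x by omega)
    rw [Nat.mul_add, Nat.mul_one] at h2
    omega

/-- Auxiliary: comparison of `(quotient, remainder)` representations. -/
lemma qq_aux_lt (m x y c c' : ℕ) (hc1 : 1 ≤ c) (hc2 : c ≤ m) (hc1' : 1 ≤ c')
    (hc2' : c' ≤ m) (h : m * x + c < m * y + c') : x < y ∨ (x = y ∧ c < c') := by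
  rcases lt_trichotomy x y with h' | h' | h'
  · exact Or.inl h'
  · subst h'
    exact Or.inr ⟨rfl, by omega⟩
  · exfalso
    have h2 := Nat.mul_le_mul_left m (show y + 1 ≤ x by omega)
    rw [Nat.mul_add, Nat.mul_one] at h2
    omega

/-- Build an element of `Qelt k w` from raw natural number data. -/
def mkq {k w : ℕ} (l i j : ℕ) (hl : l < w) (hi : i < k) (hj : j < k)
    (h1 : 1 ≤ l) (h2 : 1 ≤ j) (h3 : j ≤ i) : Qelt k w :=
  ⟨(⟨l, hl⟩, ⟨i, hi⟩, ⟨j, hj⟩), h1, h2, h3⟩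

lemma qChainIdx_mkq {k w : ℕ} (l i j : ℕ) (hl : l < w) (hi : i < k) (hj : j < k)
    (h1 : 1 ≤ l) (h2 : 1 ≤ j) (h3 : j ≤ i) :
    qChainIdx (mkq (k := k) (w := w) l i j hl hi hj h1 h2 h3) =
      (k - 1) * (l - 1) + (i - j + 1) := rfl

/-- Assigning `v^ℓ_{i,j}` to chain `(k-1)(ℓ-1) + (i-j+1)` yields a First-Fit
chain partition of `Q_{k,w}` into exactly `(k-1)(w-1)` chains. -/
theorem stmt11 (k w : ℕ) (hk : 2 ≤ k) (hw : 3 ≤ w) :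
    (∀ v : Qelt k w, 1 ≤ qChainIdx v ∧ qChainIdx v ≤ (k - 1) * (w - 1)) ∧
    (∀ a, 1 ≤ a → a ≤ (k - 1) * (w - 1) → ∃ v : Qelt k w, qChainIdx v = a) ∧
    (∀ u v : Qelt k w, u ≠ v → qChainIdx u = qChainIdx v → Qlt u v ∨ Qlt v u) ∧
    (∀ a b, 1 ≤ a → a < b → b ≤ (k - 1) * (w - 1) →
      ∀ v : Qelt k w, qChainIdx v = b →
        ∃ u : Qelt k w, qChainIdx u = a ∧ QIncomp v u) := by
  refine ⟨?_, ?_, ?_, ?_⟩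
  · -- bounds on the chain index
    rintro ⟨⟨l, i, j⟩, hl, hj, hji⟩
    dsimp only at hl hj hji
    simp only [qChainIdx]
    have hi := i.isLt
    have hlw := l.isLt
    have key : (k - 1) * ((l : ℕ) - 1) + (k - 1) ≤ (k - 1) * (w - 1) := by
      have h1 : (k - 1) * (((l : ℕ) - 1) + 1) ≤ (k - 1) * (w - 1) :=
        Nat.mul_le_mul_left _ (by omega)
      rw [Nat.mul_add, Nat.mul_one] at h1
      exact h1
    omega
  · -- surjectivity onto [1, (k-1)(w-1)]
    intro a ha hab
    have hm : 0 < k - 1 := by omega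
    obtain ⟨q, r, hqr, hr⟩ : ∃ q r, (k - 1) * q + r = a - 1 ∧ r < k - 1 :=
      ⟨(a - 1) / (k - 1), (a - 1) % (k - 1), Nat.div_add_mod _ _, Nat.mod_lt _ hm⟩
    have hq : q < w - 1 := by
      by_contra hcon
      push_neg at hcon
      have h2 := Nat.mul_le_mul_left (k - 1) hcon
      omega
    refine ⟨mkq (q + 1) (r + 1) 1
      (by omega) (by omega) (by omega) (by omega) (by omega) (by omega), ?_⟩
    rw [qChainIdx_mkq]
    simp only [Nat.add_sub_cancel]
    omega
  · -- same chain index implies comparable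
    rintro ⟨⟨l, i, j⟩, hl, hj, hji⟩ ⟨⟨l', i', j'⟩, hl', hj', hji'⟩ hne heq
    dsimp only at hl hj hji hl' hj' hji'
    simp only [qChainIdx] at heq
    have hi := i.isLt
    have hi' := i'.isLt
    obtain ⟨h1, h2⟩ := qq_aux_eq (k - 1) ((l : ℕ) - 1) ((l' : ℕ) - 1)
      ((i : ℕ) - (j : ℕ) + 1) ((i' : ℕ) - (j' : ℕ) + 1)
      (by omega) (by omega) (by omega) (by omega) heq
    have hne' : ¬((l : ℕ) = l' ∧ (i : ℕ) = i' ∧ (j : ℕ) = j') := by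
      rintro ⟨e1, e2, e3⟩
      exact hne (Subtype.ext (Prod.ext_iff.mpr
        ⟨Fin.ext e1, Prod.ext_iff.mpr ⟨Fin.ext e2, Fin.ext e3⟩⟩))
    simp only [Qlt]
    omega
  · -- first-fit property
    intro a b ha hab hbb v hvb
    obtain ⟨⟨l', i', j'⟩, hl', hj', hji'⟩ := v
    dsimp only at hl' hj' hji'
    simp only [qChainIdx] at hvb
    have hi' := i'.isLt
    have hl'w := l'.isLt
    have hm : 0 < k - 1 := by omega
    obtain ⟨q, r, hqr, hr⟩ : ∃ q r, (k - 1) * q + r = a - 1 ∧ r < k - 1 :=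
      ⟨(a - 1) / (k - 1), (a - 1) % (k - 1), Nat.div_add_mod _ _, Nat.mod_lt _ hm⟩
    have hrep : (k - 1) * q + (r + 1) = a := by omega
    have hlt : q < (l' : ℕ) - 1 ∨ (q = (l' : ℕ) - 1 ∧ r + 1 < (i' : ℕ) - (j' : ℕ) + 1) := by
      refine qq_aux_lt (k - 1) q ((l' : ℕ) - 1) (r + 1) ((i' : ℕ) - (j' : ℕ) + 1)
        (by omega) (by omega) (by omega) (by omega) ?_
      omega
    rcases hlt with hcase | ⟨hcase, hclt⟩
    · -- lower copy: take the maximal element (k-1, k-1-r) of copy q+1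
      refine ⟨mkq (q + 1) (k - 1) (k - 1 - r)
        (by omega) (by omega) (by omega) (by omega) (by omega) (by omega), ?_, ?_, ?_⟩
      · rw [qChainIdx_mkq]
        simp only [Nat.add_sub_cancel]
        omega
      · -- ¬ Qlt v u
        simp only [Qlt, mkq]
        omega
      · -- ¬ Qlt u v
        simp only [Qlt, mkq]
        omega
    · -- same copy: take (i'-1, i'-(r+1)) in copy l'
      have hi'2 : 2 ≤ (i' : ℕ) := by omega
      refine ⟨mkq (l' : ℕ) ((i' : ℕ) - 1) ((i' : ℕ) - (r + 1))
        (by omega) (by omega) (by omega) (by omega) (by omega) (by omega), ?_, ?_, ?_⟩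
      · rw [qChainIdx_mkq, ← hcase]
        omega
      · -- ¬ Qlt v u
        simp only [Qlt, mkq]
        omega
      · -- ¬ Qlt u v
        simp only [Qlt, mkq]
        omega
end

section
/- The complete w-partite graph with k−1 vertices in each of its w color classes has pathwidth exactly (k−1)(w−1), for k ≥ 2 and w ≥ 1. -/
def HasPathDecompWidthLE {β : Type} (G : SimpleGraph β) (p : ℕ) : Prop :=
  ∃ (n : ℕ) (B : Fin n → Finset β),
    (∀ v, ∃ i, v ∈ B i) ∧
    (∀ (v : β) (i j l : Fin n), i ≤ j → j ≤ l → v ∈ B i → v ∈ B l → v ∈ B j) ∧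
    (∀ u v, G.Adj u v → ∃ i, u ∈ B i ∧ v ∈ B i) ∧
    (∀ i, (B i).card ≤ p + 1)

/-- The complete multipartite graph with `w` parts of size `m` each:
vertices are pairs (part, position), adjacent iff in different parts. -/
def completeMultipartite (w m : ℕ) : SimpleGraph (Fin w × Fin m) :=
  SimpleGraph.fromRel (fun u v => u.1 ≠ v.1)

/-- The complete `w`-partite graph with `k - 1` vertices in each part has
pathwidth exactly `(k-1)(w-1)`. -/
theorem stmt16 (k w : ℕ) (hk : 2 ≤ k) (hw : 1 ≤ w) :
    HasPathDecompWidthLE (completeMultipartite w (k - 1)) ((k - 1) * (w - 1)) ∧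
    (∀ p, HasPathDecompWidthLE (completeMultipartite w (k - 1)) p →
      (k - 1) * (w - 1) ≤ p) := by
  set m := k - 1 with hmdef
  have hm : 1 ≤ m := by omega
  have hw0 : 0 < w := hw
  have key : ∀ a : Fin w,
      (Finset.univ.filter (fun v : Fin w × Fin m => v.1 ≠ a)).card = (w - 1) * m := by
    intro a
    have he : (Finset.univ.filter (fun v : Fin w × Fin m => v.1 ≠ a))
        = (Finset.univ.erase a) ×ˢ Finset.univ := by
      ext ⟨i, x⟩
      simp [Finset.mem_erase]
    rw [he, Finset.card_product, Finset.card_erase_of_mem (Finset.mem_univ a)]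
    simp
  have hadj : ∀ u v : Fin w × Fin m,
      (completeMultipartite w m).Adj u v ↔ u.1 ≠ v.1 := by
    intro u v
    constructor
    · intro h
      rcases (SimpleGraph.fromRel_adj _ u v).mp h with ⟨_, h2 | h2⟩ <;> [exact h2; exact h2.symm]
    · intro h
      exact (SimpleGraph.fromRel_adj _ u v).mpr ⟨fun he => h (by rw [he]), Or.inl h⟩
  constructor
  · -- upper bound
    refine ⟨m, fun j => insert (⟨0, hw0⟩, j)
      (Finset.univ.filter (fun v : Fin w × Fin m => v.1 ≠ ⟨0, hw0⟩)), ?_, ?_, ?_, ?_⟩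
    · intro v
      by_cases hv : v.1 = ⟨0, hw0⟩
      · exact ⟨v.2, Finset.mem_insert.mpr (Or.inl (Prod.ext hv rfl))⟩
      · exact ⟨⟨0, hm⟩, Finset.mem_insert.mpr (Or.inr (by simp [hv]))⟩
    · intro v i j l hij hjl hvi hvl
      by_cases hv : v.1 = ⟨0, hw0⟩
      · rcases Finset.mem_insert.mp hvi with h1 | h1
        · rcases Finset.mem_insert.mp hvl with h2 | h2
          · have : i = l := by rw [h1] at h2; exact congrArg Prod.snd h2
            have : j = i := le_antisymm (this ▸ hjl) hij
            exact this ▸ hvi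
          · exact absurd (Finset.mem_filter.mp h2).2 (by simp [hv])
        · exact absurd (Finset.mem_filter.mp h1).2 (by simp [hv])
      · exact Finset.mem_insert.mpr (Or.inr (by simp [hv]))
    · intro u v huv
      have h1 : u.1 ≠ v.1 := (hadj u v).mp huv
      by_cases hu : u.1 = ⟨0, hw0⟩
      · refine ⟨u.2, Finset.mem_insert.mpr (Or.inl (Prod.ext hu rfl)), ?_⟩
        exact Finset.mem_insert.mpr (Or.inr (by simp [hu ▸ h1.symm]))
      · by_cases hv : v.1 = ⟨0, hw0⟩
        · refine ⟨v.2, ?_, Finset.mem_insert.mpr (Or.inl (Prod.ext hv rfl))⟩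
          exact Finset.mem_insert.mpr (Or.inr (by simp [hu]))
        · exact ⟨⟨0, hm⟩, Finset.mem_insert.mpr (Or.inr (by simp [hu])),
            Finset.mem_insert.mpr (Or.inr (by simp [hv]))⟩
    · intro j
      calc _ ≤ (Finset.univ.filter (fun v : Fin w × Fin m => v.1 ≠ ⟨0, hw0⟩)).card + 1 :=
            Finset.card_insert_le _ _
        _ = (w - 1) * m + 1 := by rw [key]
        _ = m * (w - 1) + 1 := by ring
  · -- lower bound
    rintro p ⟨n, B, hcover, hmono, hedge, hcard⟩
    have v0 : Fin w × Fin m := (⟨0, hw0⟩, ⟨0, hm⟩)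
    -- for each v, the set of bag indices containing v is nonempty
    have hS : ∀ v : Fin w × Fin m, (Finset.univ.filter (fun i => v ∈ B i)).Nonempty := by
      intro v
      obtain ⟨i, hi⟩ := hcover v
      exact ⟨i, Finset.mem_filter.mpr ⟨Finset.mem_univ i, hi⟩⟩
    set M : Fin w × Fin m → Fin n := fun v => (Finset.univ.filter (fun i => v ∈ B i)).max' (hS v)
      with hMdef
    have hMmem : ∀ v, v ∈ B (M v) := by
      intro v
      have := Finset.max'_mem (Finset.univ.filter (fun i => v ∈ B i)) (hS v)
      exact (Finset.mem_filter.mp this).2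
    have hMle : ∀ v j, v ∈ B j → j ≤ M v := by
      intro v j hj
      exact Finset.le_max' _ j (Finset.mem_filter.mpr ⟨Finset.mem_univ j, hj⟩)
    obtain ⟨vs, -, hvs⟩ := Finset.exists_min_image Finset.univ M ⟨(⟨0, hw0⟩, ⟨0, hm⟩), Finset.mem_univ _⟩
    have hvsmin : ∀ u, M vs ≤ M u := fun u => hvs u (Finset.mem_univ u)
    set T : Finset (Fin w × Fin m) :=
      insert vs (Finset.univ.filter (fun u => u.1 ≠ vs.1)) with hTdef
    have hTsub : T ⊆ B (M vs) := by
      intro u hu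
      rcases Finset.mem_insert.mp hu with h | h
      · exact h ▸ hMmem vs
      · have hune : u.1 ≠ vs.1 := (Finset.mem_filter.mp h).2
        obtain ⟨j, hj1, hj2⟩ := hedge u vs ((hadj u vs).mpr hune)
        exact hmono u j (M vs) (M u) (hMle vs j hj2) (hvsmin u) hj1 (hMmem u)
    have hTcard : T.card = (w - 1) * m + 1 := by
      rw [hTdef, Finset.card_insert_of_notMem (by simp), key]
    have := Finset.card_le_card hTsub
    have := hcard (M vs)
    have hcm : (w - 1) * m = m * (w - 1) := Nat.mul_comm _ _
    omega
end
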